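/- Let r_X, r_Z, m be natural numbers with r_X ≤ m − 1. Then the CSS condition RM(r_X,m)^⊥ ⊆ RM(r_Z,m) holds if and only if m ≤ r_X + r_Z + 1. -/

import Mathlib

open MvPolynomial

/-- The Reed–Muller code `RM(r, m)`: the `𝔽₂`-linear subspace of functions
`(ZMod 2)^m → ZMod 2` consisting of evaluation vectors of `m`-variate polynomials over
`ZMod 2` of total degree at most `r`. -/
def RM (r m : ℕ) : Submodule (ZMod 2) ((Fin m → ZMod 2) → ZMod 2) where
  carrier := {f | ∃ p : MvPolynomial (Fin m) (ZMod 2),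
    p.totalDegree ≤ r ∧ ∀ x, f x = eval x p}
  zero_mem' := ⟨0, by simp, by simp⟩
  add_mem' := by
    rintro f g ⟨p, hp, hf⟩ ⟨q, hq, hg⟩
    exact ⟨p + q, le_trans (totalDegree_add p q) (max_le hp hq),
      fun x => by simp [hf x, hg x]⟩
  smul_mem' := by
    rintro c f ⟨p, hp, hf⟩
    refine ⟨c • p, le_trans (totalDegree_smul_le c p) hp, fun x => by simp [hf x]⟩


/-- The dual code of a subspace `C` of functions `(ZMod 2)^m → ZMod 2`, with respect to the
bilinear form `⟨u, v⟩ = ∑ x, u x * v x` over `ZMod 2`. -/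
def dualCode {m : ℕ} (C : Submodule (ZMod 2) ((Fin m → ZMod 2) → ZMod 2)) :
    Submodule (ZMod 2) ((Fin m → ZMod 2) → ZMod 2) where
  carrier := {v | ∀ u ∈ C, ∑ x : Fin m → ZMod 2, u x * v x = 0}
  zero_mem' := by intro u _; simp
  add_mem' := by
    intro v w hv hw u hu
    simpa [mul_add, Finset.sum_add_distrib] using by rw [hv u hu, hw u hu, add_zero]
  smul_mem' := by
    intro c v hv u hu
    simp only [Pi.smul_apply, smul_eq_mul, mul_left_comm, ← Finset.mul_sum]
    rw [hv u hu, mul_zero]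

/-!
Both directions rest on two facts. By Chevalley–Warning, a polynomial of total degree `< m`
sums to zero over `𝔽₂^m`, so `RM(s, m) ⊆ RM(r, m)^⊥` whenever `r + s < m`. And every
`v : 𝔽₂^m → 𝔽₂` is the multilinear polynomial `∑_S c_S x^S`, where `c_S` is the inner product
of `v` with the indicator `∏_{i ∉ S} (1 + x_i)` of the subcube `{x | supp x ⊆ S}`, a function of
degree `m - |S|`.

If `m ≤ r + s + 1` and `v ∈ RM(r, m)^⊥`, every `c_S` with `|S| > s` therefore vanishes, so
`v ∈ RM(s, m)`. If `m > r + s + 1`, a monomial `x^S` with `|S| = s + 1` lies in `RM(r, m)^⊥`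
but not in `RM(s, m)`: its inner product with the subcube indicator of `S` is `1`, whereas
`RM(s, m)` is orthogonal to `RM(m - s - 1, m)`.
-/

open Finset

section Polynomials

variable {σ R ι : Type*} [CommSemiring R]

lemma totalDegree_prod_le_card (s : Finset ι) (f : ι → MvPolynomial σ R)
    (hf : ∀ i ∈ s, (f i).totalDegree ≤ 1) : (∏ i ∈ s, f i).totalDegree ≤ s.card :=
  (totalDegree_finsetProd s f).trans <| by simpa using sum_le_sum hf

lemma totalDegree_one_add_X_le [Nontrivial R] (i : σ) :
    (1 + X i : MvPolynomial σ R).totalDegree ≤ 1 :=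
  (totalDegree_add _ _).trans <| max_le (by simp) (totalDegree_X i).le

end Polynomials

lemma RM_mono {r s m : ℕ} (h : r ≤ s) : RM r m ≤ RM s m :=
  fun _ ⟨p, hp, hf⟩ => ⟨p, hp.trans h, hf⟩

lemma RM_le_dualCode {r s m : ℕ} (h : r + s < m) : RM s m ≤ dualCode (RM r m) := by
  rintro v ⟨q, hq, hv⟩ u ⟨p, hp, hu⟩
  have hdeg : (p * q).totalDegree < (Fintype.card (ZMod 2) - 1) * Fintype.card (Fin m) := by
    simpa using (totalDegree_mul p q).trans_lt (by omega)
  simpa [hu, hv] using sum_eval_eq_zero (p * q) hdeg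

lemma prod_add_one_add_eq_ite {ι : Type*} [Fintype ι] (x y : ι → ZMod 2) :
    ∏ i, (x i + (1 + y i)) = if x = y then 1 else 0 := by
  split_ifs with hxy
  · subst hxy
    exact prod_eq_one fun i _ => by generalize x i = a; revert a; decide
  · obtain ⟨i, hi⟩ := Function.ne_iff.1 hxy
    refine prod_eq_zero (mem_univ i) ?_
    revert hi; generalize x i = a; generalize y i = b; revert a b; decide

variable {m : ℕ}

def monomialFun (S : Finset (Fin m)) (x : Fin m → ZMod 2) : ZMod 2 := ∏ i ∈ S, x i

def subcubeIndicator (S : Finset (Fin m)) (x : Fin m → ZMod 2) : ZMod 2 := ∏ i ∈ Sᶜ, (1 + x i)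

lemma monomialFun_mem_RM (S : Finset (Fin m)) : monomialFun S ∈ RM S.card m :=
  ⟨∏ i ∈ S, X i, totalDegree_prod_le_card S _ fun i _ => (totalDegree_X i).le,
    fun x => by simp [monomialFun]⟩

lemma subcubeIndicator_mem_RM (S : Finset (Fin m)) : subcubeIndicator S ∈ RM (m - S.card) m :=
  ⟨∏ i ∈ Sᶜ, (1 + X i),
    (totalDegree_prod_le_card Sᶜ _ fun i _ => totalDegree_one_add_X_le i).trans
      (by rw [card_compl, Fintype.card_fin]),
    fun x => by simp [subcubeIndicator]⟩

lemma sum_monomialFun_mul_subcubeIndicator (S : Finset (Fin m)) :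
    ∑ x, monomialFun S x * subcubeIndicator S x = 1 := by
  have hfactor : ∀ x : Fin m → ZMod 2, monomialFun S x * subcubeIndicator S x
      = ∏ i, if i ∈ S then x i else 1 + x i := fun x => by
    rw [← prod_mul_prod_compl S, prod_congr rfl fun i hi => if_pos hi,
      prod_congr rfl fun i hi => if_neg (mem_compl.1 hi)]
    rfl
  simp only [hfactor]
  rw [← Fintype.prod_sum (fun i t => if i ∈ S then t else 1 + t)]
  refine prod_eq_one fun i _ => ?_
  by_cases hi : i ∈ S <;> simp only [hi, if_true, if_false] <;> decide

lemma eq_sum_smul_monomialFun (v : (Fin m → ZMod 2) → ZMod 2) :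
    v = ∑ S, (∑ y, subcubeIndicator S y * v y) • monomialFun S := by
  funext x
  calc v x = ∑ y, (if x = y then 1 else 0) * v y := by simp
    _ = ∑ y, ∑ S, monomialFun S x * subcubeIndicator S y * v y := by
        simp only [← prod_add_one_add_eq_ite, Fintype.prod_add, sum_mul]; rfl
    _ = _ := by
        rw [sum_comm]
        simp only [Finset.sum_apply, Pi.smul_apply, smul_eq_mul, sum_mul]
        exact sum_congr rfl fun S _ => sum_congr rfl fun y _ => by ring

lemma dualCode_RM_le_RM {r s : ℕ} (h : m ≤ r + s + 1) : dualCode (RM r m) ≤ RM s m := by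
  intro v hv
  rw [eq_sum_smul_monomialFun v]
  refine Submodule.sum_mem _ fun S _ => ?_
  by_cases hS : S.card ≤ s
  · exact Submodule.smul_mem _ _ (RM_mono hS (monomialFun_mem_RM S))
  · have hcoeff : ∑ y, subcubeIndicator S y * v y = 0 :=
      hv _ (RM_mono (by omega) (subcubeIndicator_mem_RM S))
    simp [hcoeff]

lemma not_dualCode_RM_le_RM {r s : ℕ} (h : r + s + 1 < m) : ¬ dualCode (RM r m) ≤ RM s m := by
  intro hle
  obtain ⟨S, -, hS⟩ := exists_subset_card_eq (s := (univ : Finset (Fin m))) (n := s + 1)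
    (by rw [card_univ, Fintype.card_fin]; omega)
  have hmon : monomialFun S ∈ RM s m :=
    hle (RM_le_dualCode (by omega) (hS ▸ monomialFun_mem_RM S))
  have horth := RM_le_dualCode (r := s) (by omega) (subcubeIndicator_mem_RM S) _ hmon
  rw [sum_monomialFun_mul_subcubeIndicator] at horth
  exact one_ne_zero horth

theorem stmt_4_general (rX rZ m : ℕ) :
    dualCode (RM rX m) ≤ RM rZ m ↔ m ≤ rX + rZ + 1 :=
  ⟨fun hle => not_lt.1 fun hlt => not_dualCode_RM_le_RM hlt hle, dualCode_RM_le_RM⟩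

/-- For `r_X ≤ m - 1` (i.e. `r_X + 1 ≤ m`), the CSS condition
`RM(r_X, m)^⊥ ⊆ RM(r_Z, m)` holds iff `m ≤ r_X + r_Z + 1`. -/
theorem stmt_4 (rX rZ m : ℕ) (h : rX + 1 ≤ m) :
    dualCode (RM rX m) ≤ RM rZ m ↔ m ≤ rX + rZ + 1 :=
  stmt_4_general rX rZ m
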